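/- Let αℕ denote the one-point compactification of the discrete space ℕ, with point at infinity ∞, and let G = C(αℕ, ℤ). Let H = {f ∈ G | f(∞) is even}; H is an additive subgroup of G closed under the pointwise lattice operations, and the constant function 2 belongs to H. Nevertheless, the constant function 2 does not belong to the additive subgroup of G generated by the set of elements of H that are singular in H, i.e., the set of f ∈ H such that 0 ≤ f and for every a ∈ H with 0 ≤ a ≤ f one has a ⊓ (f − a) = 0. Consequently, the unital ℓ-group (H, 2) is not a Specker ℓ-group, although it is a unital ℓ-subgroup of the unital Specker ℓ-group (G, 2). -/

import Mathlib

/-!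
Evaluation at `∞` is an additive homomorphism `C(αℕ, ℤ) → ℤ` that kills every element `f` singular
in `H`: otherwise `f ∞ ≥ 2` by parity, `f` takes the value `f ∞` at some `n ∈ ℕ`, and the indicator
of `{n}`, which lies in `H` since it vanishes at `∞`, and `f` minus it are not disjoint. So it kills
the subgroup generated by these elements, but not the constant `2`.
-/

open OnePoint

/-- The subgroup of `C(αℕ, ℤ)` of functions whose value at `∞` is even. -/
def Hsub : AddSubgroup C(OnePoint ℕ, ℤ) where
  carrier := {f : C(OnePoint ℕ, ℤ) | Even (f OnePoint.infty)}
  add_mem' := fun {a b} ha hb => by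
    simp only [Set.mem_setOf_eq, ContinuousMap.add_apply] at *
    exact ha.add hb
  zero_mem' := by
    simp only [Set.mem_setOf_eq, ContinuousMap.zero_apply]
    exact ⟨0, by simp⟩
  neg_mem' := fun {a} ha => by
    simp only [Set.mem_setOf_eq, ContinuousMap.neg_apply] at *
    exact ha.neg

def IsSingularIn {G : Type*} [AddGroup G] [Lattice G] (H : AddSubgroup G) (f : G) : Prop :=
  f ∈ H ∧ 0 ≤ f ∧ ∀ a : G, a ∈ H → 0 ≤ a → a ≤ f → a ⊓ (f - a) = 0

namespace OnePoint

variable {X : Type*} [TopologicalSpace X]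

theorem isClopen_singleton_coe [DiscreteTopology X] (x : X) :
    IsClopen ({(x : OnePoint X)} : Set (OnePoint X)) :=
  ⟨isClosed_singleton, by
    rw [← Set.image_singleton, isOpen_image_coe]
    exact isOpen_discrete _⟩

theorem exists_coe_eq_apply_infty [NoncompactSpace X] {Y : Type*} [TopologicalSpace Y]
    [DiscreteTopology Y] (f : C(OnePoint X, Y)) : ∃ x : X, f x = f ∞ :=
  denseRange_coe.exists_mem_open ((isOpen_discrete {f ∞}).preimage f.continuous) ⟨∞, rfl⟩

end OnePoint

namespace LocallyConstant

variable {Y : Type*} [TopologicalSpace Y] {U : Set Y} (hU : IsClopen U)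

theorem toContinuousMap_charFn_apply (y : Y) :
    (charFn ℤ hU).toContinuousMap y = U.indicator 1 y :=
  rfl

theorem toContinuousMap_charFn_nonneg : 0 ≤ (charFn ℤ hU).toContinuousMap :=
  Set.indicator_nonneg fun _ _ => zero_le_one

theorem toContinuousMap_charFn_le {f : C(Y, ℤ)} (hf₀ : 0 ≤ f) (hf : ∀ y ∈ U, 1 ≤ f y) :
    (charFn ℤ hU).toContinuousMap ≤ f := fun y => by
  by_cases hy : y ∈ U
  · simpa [toContinuousMap_charFn_apply, hy] using hf y hy
  · simpa [toContinuousMap_charFn_apply, hy] using hf₀ y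

theorem toContinuousMap_charFn_inf_sub_ne_zero {f : C(Y, ℤ)} {y : Y} (hy : y ∈ U)
    (hf : 2 ≤ f y) :
    (charFn ℤ hU).toContinuousMap ⊓ (f - (charFn ℤ hU).toContinuousMap) ≠ 0 := fun h => by
  have := congrArg (· y) h
  simp only [ContinuousMap.inf_apply, ContinuousMap.sub_apply, toContinuousMap_charFn_apply,
    Set.indicator_of_mem hy, Pi.one_apply, ContinuousMap.zero_apply] at this
  omega

end LocallyConstant

theorem sup_mem_Hsub {f g : C(OnePoint ℕ, ℤ)} (hf : f ∈ Hsub) (hg : g ∈ Hsub) : f ⊔ g ∈ Hsub := by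
  change Even (max (f ∞) (g ∞))
  rcases max_choice (f ∞) (g ∞) with h | h <;> rw [h]
  exacts [hf, hg]

theorem inf_mem_Hsub {f g : C(OnePoint ℕ, ℤ)} (hf : f ∈ Hsub) (hg : g ∈ Hsub) : f ⊓ g ∈ Hsub := by
  change Even (min (f ∞) (g ∞))
  rcases min_choice (f ∞) (g ∞) with h | h <;> rw [h]
  exacts [hf, hg]

theorem const_two_mem_Hsub : ContinuousMap.const (OnePoint ℕ) (2 : ℤ) ∈ Hsub :=
  even_two

theorem apply_infty_eq_zero_of_isSingularIn {f : C(OnePoint ℕ, ℤ)} (hf : IsSingularIn Hsub f) :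
    f ∞ = 0 := by
  obtain ⟨hf_mem, hf₀, hf_sing⟩ := hf
  by_contra hne
  have htwo : 2 ≤ f ∞ := by
    obtain ⟨k, hk⟩ := hf_mem
    have := hf₀ ∞
    change 0 ≤ f ∞ at this
    omega
  obtain ⟨n, hn⟩ := exists_coe_eq_apply_infty f
  have hU := isClopen_singleton_coe n
  have ha : (LocallyConstant.charFn ℤ hU).toContinuousMap ∈ Hsub := by
    change Even (Set.indicator _ 1 ∞)
    rw [Set.indicator_of_notMem (Set.mem_singleton_iff.not.mpr (infty_ne_coe n))]
    exact Even.zero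
  refine LocallyConstant.toContinuousMap_charFn_inf_sub_ne_zero hU rfl (hn ▸ htwo)
    (hf_sing _ ha (LocallyConstant.toContinuousMap_charFn_nonneg hU) ?_)
  refine LocallyConstant.toContinuousMap_charFn_le hU hf₀ ?_
  rintro _ rfl
  omega

theorem closure_isSingularIn_Hsub_le :
    AddSubgroup.closure {f | IsSingularIn Hsub f} ≤
      ((Pi.evalAddMonoidHom _ ∞).comp ContinuousMap.coeFnAddMonoidHom).ker :=
  AddSubgroup.closure_le _ |>.mpr fun _ hf => apply_infty_eq_zero_of_isSingularIn hf

/-- `Hsub` is a sublattice-subgroup of `G = C(αℕ, ℤ)` containing the constant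
function `2`, yet `2` is not in the subgroup of `G` generated by the elements
of `Hsub` that are singular in `Hsub`. Hence `(Hsub, 2)` is a unital
ℓ-subgroup of the unital Specker ℓ-group `(G, 2)` that is not Specker. -/
theorem stmt18 :
    (∀ f g : C(OnePoint ℕ, ℤ), f ∈ Hsub → g ∈ Hsub →
      f ⊔ g ∈ Hsub ∧ f ⊓ g ∈ Hsub) ∧
    ContinuousMap.const (OnePoint ℕ) (2 : ℤ) ∈ Hsub ∧
    ContinuousMap.const (OnePoint ℕ) (2 : ℤ) ∉
      AddSubgroup.closure {f : C(OnePoint ℕ, ℤ) | f ∈ Hsub ∧ 0 ≤ f ∧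
        ∀ a : C(OnePoint ℕ, ℤ), a ∈ Hsub → 0 ≤ a → a ≤ f →
          a ⊓ (f - a) = 0} :=
  ⟨fun _ _ hf hg => ⟨sup_mem_Hsub hf hg, inf_mem_Hsub hf hg⟩, const_two_mem_Hsub,
    fun h => two_ne_zero (closure_isSingularIn_Hsub_le h)⟩
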